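/- Let n = 2k, e a divisor of k, h : F_{2^e} → F_{2^e} arbitrary, and F^i(x) = x^{2^i} h(Tr^n_e(x)) on F_{2^n}. If e = k and h is a permutation of F_{2^k}, then for every α ∈ F_{2^n} \ F_{2^k}, the function x ↦ Tr^n_1(αF^i(x)) is bent; consequently F^i has the maximal number 2^n - 2^k of bent components. -/

import Mathlib

open Finset

def chr (b : ZMod 2) : ℤ := if b = 0 then 1 else -1

variable {K : Type*} [Field K] [Fintype K] [Algebra (ZMod 2) K]

/-- The absolute trace `Tr^n_1 : F_{2^n} → F_2`. -/
noncomputable def tr (x : K) : ZMod 2 := Algebra.trace (ZMod 2) K x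

/-- The Walsh transform of a Boolean function `f` on `K = F_{2^n}`. -/
noncomputable def walshF (f : K → ZMod 2) (l : K) : ℤ :=
  ∑ x, chr (f x + tr (l * x))

/-- `f` is bent on `K = F_{2^{2k}}`: all Walsh values are `±2^k`. -/
def IsBentF (k : ℕ) (f : K → ZMod 2) : Prop :=
  ∀ l : K, walshF f l = 2 ^ k ∨ walshF f l = -(2 ^ k)

/-! Let `L = F_{2^k}` be the subfield of `K` fixed by `x ↦ x^{2^k}`. For `α ∉ L` every `x ∈ K`
is uniquely `s + α t` with `s, t ∈ L`, and then `x + x^{2^k} = (α + α^{2^k}) t`. In these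
coordinates the Walsh sum at `β` is a sum over `t` of a sign times the character sum over `s ∈ L`
of `Tr((α h((α + α^{2^k}) t) + β^{2^i}) s^{2^i})`, which is `2^k` or `0` according as
`α h((α + α^{2^k}) t) + β^{2^i}` lies in `L` or not. As `h` permutes `L`, this happens for
exactly one `t`, so the Walsh value is `±2^k`. For `α ∈ L` the component is invariant under
translation by `L`, so its Walsh transform vanishes at every `β ∉ L`: the bent components are
exactly those with `α ∉ L`. -/

lemma chr_add (a b : ZMod 2) : chr (a + b) = chr a * chr b := by
  revert a b; decide

lemma chr_mul_eq_self_or_neg (a : ZMod 2) (m : ℤ) : chr a * m = m ∨ chr a * m = -m := by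
  have : chr a = 1 ∨ chr a = -1 := by revert a; decide
  rcases this with h | h <;> simp [h]

lemma sum_chr_eq_zero {G : Type*} [AddGroup G] [Fintype G] {φ : G → ZMod 2} (g₀ : G)
    (hφ : ∀ g, φ (g + g₀) ≠ φ g) : ∑ g, chr (φ g) = 0 := by
  have hflip : ∀ a b : ZMod 2, a ≠ b → chr a = -chr b := by decide
  have hneg : ∑ g, chr (φ g) = -∑ g, chr (φ g) := by
    rw [← Finset.sum_neg_distrib]
    exact Fintype.sum_equiv (Equiv.addRight g₀) _ _ fun g => hflip _ _ (hφ g).symm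
  linarith

instance {F : Type*} [Field F] [Algebra (ZMod 2) F] : CharP F 2 :=
  charP_of_injective_algebraMap' (ZMod 2) 2

section FrobFixed

variable (F : Type*) [Field F] [CharP F 2] (k : ℕ)

/-- `F_{2^k}` when `|F| = 2^{2k}`. -/
def frobFixed : Subfield F where
  carrier := {a | a ^ 2 ^ k = a}
  mul_mem' {a b} ha hb := by simp_all [mul_pow]
  one_mem' := one_pow _
  add_mem' {a b} ha hb := by simp_all [add_pow_char_pow]
  zero_mem' := zero_pow (by positivity)
  neg_mem' {a} ha := by simp_all [CharTwo.neg_eq]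
  inv_mem' a ha := by simp_all [inv_pow]

/-- The relative trace `Tr^{2k}_k` when `|F| = 2^{2k}`. -/
def relTrace : F →+ F :=
  AddMonoidHom.mk' (fun x => x + x ^ 2 ^ k) fun x y => by rw [add_pow_char_pow]; ring

variable {F k}

lemma mem_frobFixed {a : F} : a ∈ frobFixed F k ↔ a ^ 2 ^ k = a := Iff.rfl

lemma relTrace_apply (x : F) : relTrace F k x = x + x ^ 2 ^ k := rfl

lemma relTrace_eq_zero_iff {x : F} : relTrace F k x = 0 ↔ x ∈ frobFixed F k := by
  rw [relTrace_apply, CharTwo.add_eq_zero, eq_comm]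
  rfl

lemma ker_relTrace : (relTrace F k).ker = (frobFixed F k).toAddSubgroup :=
  AddSubgroup.ext fun _ => relTrace_eq_zero_iff

lemma relTrace_add_mul {s t : F} (hs : s ∈ frobFixed F k) (ht : t ∈ frobFixed F k) (α : F) :
    relTrace F k (s + α * t) = relTrace F k α * t := by
  rw [map_add, relTrace_eq_zero_iff.2 hs, zero_add,
    relTrace_apply, relTrace_apply, mul_pow, mem_frobFixed.1 ht, add_mul]

lemma relTrace_mem_frobFixed [Fintype F] (hcard : Fintype.card F = 2 ^ (2 * k)) (x : F) :
    relTrace F k x ∈ frobFixed F k := by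
  rw [mem_frobFixed, relTrace_apply, add_pow_char_pow, ← pow_mul, ← pow_add, ← two_mul, ← hcard,
    FiniteField.pow_card, add_comm]

lemma card_frobFixed_le [Fintype F] (hk : 0 < k) : Nat.card (frobFixed F k) ≤ 2 ^ k := by
  classical
  rw [Nat.card_eq_fintype_card, Fintype.card_subtype,
    ← FiniteField.X_pow_card_sub_X_natDegree_eq F (Nat.one_lt_two_pow hk.ne')]
  refine Polynomial.card_le_degree_of_subset_roots fun a ha => ?_
  have hX : (Polynomial.X ^ 2 ^ k - Polynomial.X : Polynomial F) ≠ 0 :=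
    FiniteField.X_pow_card_sub_X_ne_zero F (Nat.one_lt_two_pow hk.ne')
  simp_all [Polynomial.mem_roots hX, mem_frobFixed, sub_eq_zero]

/-- `relTrace` has kernel `L` and image inside `L`, so `|F| ≤ |L|²`, while `|L| ≤ 2^k` because
`L` consists of roots of `X^{2^k} - X`. -/
theorem card_frobFixed_and_range_relTrace [Fintype F] (hcard : Fintype.card F = 2 ^ (2 * k)) :
    Nat.card (frobFixed F k) = 2 ^ k ∧ (relTrace F k).range = (relTrace F k).ker := by
  have hk : 0 < k := Nat.pos_of_ne_zero fun hk0 =>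
    (Fintype.one_lt_card (α := F)).ne' (by rw [hcard, hk0]; rfl)
  have hrange : (relTrace F k).range ≤ (relTrace F k).ker := by
    rintro _ ⟨x, rfl⟩
    rw [ker_relTrace]
    exact relTrace_mem_frobFixed hcard x
  have hker : Nat.card (relTrace F k).ker = Nat.card (frobFixed F k) := by
    rw [ker_relTrace]; rfl
  have hprod : Nat.card (relTrace F k).ker * Nat.card (relTrace F k).range = 2 ^ k * 2 ^ k := by
    rw [← AddSubgroup.index_ker, AddSubgroup.card_mul_index, Nat.card_eq_fintype_card, hcard,
      two_mul, pow_add]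
  have hle := AddSubgroup.card_le_of_le hrange
  have hL := card_frobFixed_le (F := F) hk
  have hL' : Nat.card (frobFixed F k) = 2 ^ k := by
    rw [← hker] at hL ⊢
    nlinarith
  refine ⟨hL', AddSubgroup.eq_of_le_of_card_ge hrange ?_⟩
  rw [hker, hL']
  nlinarith

end FrobFixed

section Trace

variable {F : Type*} [Field F] [Algebra (ZMod 2) F]

lemma tr_add (x y : F) : tr (x + y) = tr x + tr y := map_add (Algebra.trace (ZMod 2) F) x y

variable [Finite F]

lemma tr_pow_two_pow (m : ℕ) (x : F) : tr (x ^ 2 ^ m) = tr x := by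
  induction m with
  | zero => simp
  | succ m ih =>
    have := Algebra.trace_eq_of_algEquiv (FiniteField.frobeniusAlgEquivOfAlgebraic (ZMod 2) F)
      (x ^ 2 ^ m)
    rw [FiniteField.coe_frobeniusAlgEquivOfAlgebraic, ZMod.card] at this
    rw [pow_succ, pow_mul, tr, this, ← tr, ih]

lemma exists_tr_ne_zero : ∃ y : F, tr y ≠ 0 := by
  by_contra! h
  exact Algebra.trace_ne_zero (ZMod 2) F (LinearMap.ext h)

end Trace

lemma Subfield.add_mul_mem_iff_of_notMem {F : Type*} [Field F] {L : Subfield F} {α s w : F}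
    (hα : α ∉ L) (hs : s ∈ L) (hw : w ∈ L) : s + α * w ∈ L ↔ w = 0 := by
  refine ⟨fun h => by_contra fun hw0 => hα ?_, fun h => by simpa [h] using hs⟩
  have : α = (s + α * w - s) / w := by field_simp; ring
  rw [this]
  exact div_mem (sub_mem h hs) hw

lemma Subfield.add_mul_injective {F : Type*} [Field F] {L : Subfield F} {α : F} (hα : α ∉ L) :
    Function.Injective fun p : L × L => (p.1 : F) + α * p.2 := by
  rintro ⟨s, t⟩ ⟨s', t'⟩ h
  have hdiff : ((s : F) - s') + α * ((t : F) - t') = 0 := by linear_combination h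
  have ht : (t : F) - t' = 0 :=
    (Subfield.add_mul_mem_iff_of_notMem hα (sub_mem s.2 s'.2) (sub_mem t.2 t'.2)).1
      (hdiff ▸ L.zero_mem)
  rw [ht, mul_zero, add_zero] at hdiff
  rw [sub_eq_zero] at ht hdiff
  rw [Subtype.ext ht, Subtype.ext hdiff]

lemma Subfield.bijOn_mul {F : Type*} [Field F] {L : Subfield F} {c : F} (hc : c ∈ L)
    (hc0 : c ≠ 0) : Set.BijOn (c * ·) L L :=
  ⟨fun _ ht => mul_mem hc ht, fun _ _ _ _ h => mul_left_cancel₀ hc0 h,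
    fun u hu => ⟨c⁻¹ * u, mul_mem (inv_mem hc) hu, by simp [hc0]⟩⟩

section Components

open Classical

variable {k : ℕ}

lemma tr_eq_zero_of_mem_frobFixed (hcard : Fintype.card K = 2 ^ (2 * k)) {a : K}
    (ha : a ∈ frobFixed K k) : tr a = 0 := by
  have ha' : a ∈ (relTrace K k).range := by
    rw [(card_frobFixed_and_range_relTrace hcard).2, ker_relTrace]; exact ha
  obtain ⟨x, rfl⟩ := ha'
  rw [relTrace_apply, tr_add, tr_pow_two_pow, CharTwo.add_self_eq_zero]

lemma add_mul_bijective (hcard : Fintype.card K = 2 ^ (2 * k)) {α : K}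
    (hα : α ∉ frobFixed K k) :
    Function.Bijective fun p : frobFixed K k × frobFixed K k => (p.1 : K) + α * p.2 := by
  refine (Subfield.add_mul_injective hα).bijective_of_nat_card_le ?_
  rw [Nat.card_prod, (card_frobFixed_and_range_relTrace hcard).1, Nat.card_eq_fintype_card,
    hcard, two_mul, pow_add]

lemma walshF_eq_sum_frobFixed (hcard : Fintype.card K = 2 ^ (2 * k)) {α : K}
    (hα : α ∉ frobFixed K k) (f : K → ZMod 2) (β : K) :
    walshF f β = ∑ t : frobFixed K k, ∑ s : frobFixed K k,
      chr (f (s + α * t) + tr (β * (s + α * t))) := by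
  rw [← Fintype.sum_prod_type_right', walshF]
  exact (Fintype.sum_bijective _ (add_mul_bijective hcard hα) _ _ fun _ => rfl).symm

/-- Otherwise `tr` would vanish on `L + δ L = K`. -/
lemma exists_tr_mul_ne_zero (hcard : Fintype.card K = 2 ^ (2 * k)) {δ : K}
    (hδ : δ ∉ frobFixed K k) : ∃ s ∈ frobFixed K k, tr (δ * s) ≠ 0 := by
  by_contra! h
  obtain ⟨y, hy⟩ := exists_tr_ne_zero (F := K)
  obtain ⟨⟨s, t⟩, rfl⟩ := (add_mul_bijective hcard hδ).2 y
  exact hy (by rw [tr_add, tr_eq_zero_of_mem_frobFixed hcard s.2, h t t.2, add_zero])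

lemma sum_chr_tr_mul_frobFixed (hcard : Fintype.card K = 2 ^ (2 * k)) (δ : K) :
    ∑ s : frobFixed K k, chr (tr (δ * s)) = if δ ∈ frobFixed K k then 2 ^ k else 0 := by
  split_ifs with hδ
  · have hone : ∀ s : frobFixed K k, chr (tr (δ * s)) = 1 := fun s => by
      rw [tr_eq_zero_of_mem_frobFixed hcard (mul_mem hδ s.2)]; rfl
    simp [hone, ← Nat.card_eq_fintype_card, (card_frobFixed_and_range_relTrace hcard).1]
  · obtain ⟨s₀, hs₀, hδs₀⟩ := exists_tr_mul_ne_zero hcard hδ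
    refine sum_chr_eq_zero ⟨s₀, hs₀⟩ fun s => ?_
    rwa [Subfield.coe_add, mul_add, tr_add, Ne, add_eq_left]

lemma sum_frobFixed_pow_two_pow {M : Type*} [AddCommMonoid M] (g : K → M) (i : ℕ) :
    ∑ s : frobFixed K k, g (s ^ 2 ^ i) = ∑ s : frobFixed K k, g s := by
  let frob : frobFixed K k → frobFixed K k := fun s => ⟨s ^ 2 ^ i, pow_mem s.2 _⟩
  have hinj : Function.Injective frob := fun s s' hss' => by
    refine Subtype.ext (iterateFrobenius_inj K 2 i ?_)
    simpa only [iterateFrobenius_def] using congrArg Subtype.val hss'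
  exact Fintype.sum_bijective frob (Finite.injective_iff_bijective.1 hinj) _ _ fun _ => rfl

lemma tr_component_add_mul (i : ℕ) (h : K → K) {s t : K} (hs : s ∈ frobFixed K k)
    (ht : t ∈ frobFixed K k) (α β : K) :
    tr (α * ((s + α * t) ^ 2 ^ i * h ((s + α * t) + (s + α * t) ^ 2 ^ k))) +
        tr (β * (s + α * t)) =
      (tr (α * α ^ 2 ^ i * t ^ 2 ^ i * h ((α + α ^ 2 ^ k) * t)) + tr (β * (α * t))) +
        tr ((α * h ((α + α ^ 2 ^ k) * t) + β ^ 2 ^ i) * s ^ 2 ^ i) := by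
  rw [← relTrace_apply, relTrace_add_mul hs ht, relTrace_apply, add_pow_char_pow, mul_pow,
    mul_add β, tr_add (β * s), ← tr_pow_two_pow i (β * s), mul_pow]
  simp only [← tr_add]
  congr 1
  ring

lemma walshF_component_eq_sum (hcard : Fintype.card K = 2 ^ (2 * k)) (i : ℕ) (h : K → K)
    {α : K} (hα : α ∉ frobFixed K k) (β : K) :
    walshF (fun x => tr (α * (x ^ 2 ^ i * h (x + x ^ 2 ^ k)))) β =
      ∑ t : frobFixed K k,
        chr (tr (α * α ^ 2 ^ i * t ^ 2 ^ i * h ((α + α ^ 2 ^ k) * t)) + tr (β * (α * t))) *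
          if α * h ((α + α ^ 2 ^ k) * t) + β ^ 2 ^ i ∈ frobFixed K k then 2 ^ k else 0 := by
  rw [walshF_eq_sum_frobFixed hcard hα]
  refine Finset.sum_congr rfl fun t _ => ?_
  rw [Finset.sum_congr rfl fun s _ => by rw [tr_component_add_mul i h s.2 t.2, chr_add],
    ← Finset.mul_sum, sum_frobFixed_pow_two_pow (fun x => chr (tr (_ * x))),
    sum_chr_tr_mul_frobFixed hcard]

theorem isBentF_component (hcard : Fintype.card K = 2 ^ (2 * k)) (i : ℕ)
    {h : K → K} (hperm : Set.BijOn h (frobFixed K k) (frobFixed K k)) {α : K}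
    (hα : α ∉ frobFixed K k) : IsBentF k (fun x => tr (α * (x ^ 2 ^ i * h (x + x ^ 2 ^ k)))) := by
  intro β
  set c := α + α ^ 2 ^ k
  have hc : c ∈ frobFixed K k := by
    simpa only [relTrace_apply] using relTrace_mem_frobFixed hcard α
  have hc0 : c ≠ 0 := fun h0 => hα (CharTwo.add_eq_zero.1 h0).symm
  have hbij := hperm.comp (Subfield.bijOn_mul hc hc0)
  obtain ⟨⟨s₀, t₀⟩, hβ⟩ := (add_mul_bijective hcard hα).2 (β ^ 2 ^ i)
  obtain ⟨t₁, ht₁, hht₁⟩ := hbij.surjOn t₀.2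
  have hcond : ∀ t : frobFixed K k,
      α * h (c * t) + β ^ 2 ^ i ∈ frobFixed K k ↔ t = ⟨t₁, ht₁⟩ := by
    intro t
    have hht : h (c * t) ∈ frobFixed K k := hperm.mapsTo (mul_mem hc t.2)
    rw [← hβ, show α * h (c * t) + (s₀ + α * t₀) = s₀ + α * (h (c * t) + t₀) by ring,
      Subfield.add_mul_mem_iff_of_notMem hα s₀.2 (add_mem hht t₀.2), CharTwo.add_eq_zero,
      ← hht₁, Subtype.ext_iff]
    exact ⟨fun e => hbij.injOn t.2 ht₁ e, fun e => by rw [e]; rfl⟩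
  rw [walshF_component_eq_sum hcard i h hα β, Fintype.sum_eq_single ⟨t₁, ht₁⟩ fun t ht => by
    rw [if_neg ((hcond t).not.2 ht), mul_zero], if_pos ((hcond _).2 rfl)]
  exact chr_mul_eq_self_or_neg _ _

lemma walshF_eq_zero_of_add_right {f : K → ZMod 2} {s β : K} (hf : ∀ x, f (x + s) = f x)
    (hs : tr (β * s) ≠ 0) : walshF f β = 0 :=
  sum_chr_eq_zero s fun x => by rwa [hf, mul_add, tr_add, ← add_assoc, Ne, add_eq_left]

lemma tr_component_add_of_mem (hcard : Fintype.card K = 2 ^ (2 * k)) (i : ℕ)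
    {h : K → K} (hmaps : Set.MapsTo h (frobFixed K k) (frobFixed K k)) {α s : K}
    (hα : α ∈ frobFixed K k) (hs : s ∈ frobFixed K k) (x : K) :
    tr (α * ((x + s) ^ 2 ^ i * h ((x + s) + (x + s) ^ 2 ^ k))) =
      tr (α * (x ^ 2 ^ i * h (x + x ^ 2 ^ k))) := by
  have hH : h (x + x ^ 2 ^ k) ∈ frobFixed K k :=
    hmaps (relTrace_apply (k := k) x ▸ relTrace_mem_frobFixed hcard x)
  rw [← relTrace_apply (x + s), map_add, relTrace_eq_zero_iff.2 hs, add_zero, relTrace_apply,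
    add_pow_char_pow, add_mul, mul_add, tr_add,
    tr_eq_zero_of_mem_frobFixed hcard (mul_mem hα (mul_mem (pow_mem hs _) hH)), add_zero]

lemma exists_notMem_frobFixed (hcard : Fintype.card K = 2 ^ (2 * k)) :
    ∃ β : K, β ∉ frobFixed K k := by
  obtain ⟨y, hy⟩ := exists_tr_ne_zero (F := K)
  exact ⟨y, fun hy' => hy (tr_eq_zero_of_mem_frobFixed hcard hy')⟩

theorem not_isBentF_component (hcard : Fintype.card K = 2 ^ (2 * k)) (i : ℕ)
    {h : K → K} (hmaps : Set.MapsTo h (frobFixed K k) (frobFixed K k)) {α : K}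
    (hα : α ∈ frobFixed K k) :
    ¬IsBentF k (fun x => tr (α * (x ^ 2 ^ i * h (x + x ^ 2 ^ k)))) := by
  intro hbent
  obtain ⟨β, hβ⟩ := exists_notMem_frobFixed hcard
  obtain ⟨s, hs, hβs⟩ := exists_tr_mul_ne_zero hcard hβ
  have hzero := walshF_eq_zero_of_add_right (f := fun x => tr (α * (x ^ 2 ^ i * h (x + x ^ 2 ^ k))))
    (tr_component_add_of_mem hcard i hmaps hα hs) hβs
  have hpos : (0 : ℤ) < 2 ^ k := by positivity
  rcases hbent β with hW | hW <;> rw [hzero] at hW <;> linarith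

end Components

theorem stmt10_general (k i : ℕ) (hcard : Fintype.card K = 2 ^ (2 * k))
    (h : K → K)
    (hperm : Set.BijOn h {a : K | a ^ (2 ^ k) = a} {a : K | a ^ (2 ^ k) = a}) :
    (∀ α : K, α ^ (2 ^ k) ≠ α →
      IsBentF k (fun x => tr (α * (x ^ (2 ^ i) * h (x + x ^ (2 ^ k)))))) ∧
    Nat.card {α : K | α ≠ 0 ∧
        IsBentF k (fun x => tr (α * (x ^ (2 ^ i) * h (x + x ^ (2 ^ k)))))} =
      2 ^ (2 * k) - 2 ^ k := by
  have hbent : ∀ α : K, α ∉ frobFixed K k →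
      IsBentF k (fun x => tr (α * (x ^ (2 ^ i) * h (x + x ^ (2 ^ k))))) :=
    fun α hα => isBentF_component hcard i hperm hα
  refine ⟨hbent, ?_⟩
  have hset : {α : K | α ≠ 0 ∧
      IsBentF k (fun x => tr (α * (x ^ (2 ^ i) * h (x + x ^ (2 ^ k)))))} =
      (frobFixed K k : Set K)ᶜ := by
    ext α
    refine ⟨fun hα hmem => not_isBentF_component hcard i hperm.mapsTo hmem hα.2,
      fun hα => ⟨fun h0 => hα (h0 ▸ zero_mem _), hbent α hα⟩⟩
  rw [hset, Nat.card_coe_set_eq, Set.ncard_compl, ← Nat.card_coe_set_eq, SetLike.coe_sort_coe,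
    (card_frobFixed_and_range_relTrace hcard).1, Nat.card_eq_fintype_card, hcard]

theorem stmt10 (k i : ℕ) (hk : 0 < k) (hcard : Fintype.card K = 2 ^ (2 * k))
    (h : K → K)
    (hperm : Set.BijOn h {a : K | a ^ (2 ^ k) = a} {a : K | a ^ (2 ^ k) = a}) :
    (∀ α : K, α ^ (2 ^ k) ≠ α →
      IsBentF k (fun x => tr (α * (x ^ (2 ^ i) * h (x + x ^ (2 ^ k)))))) ∧
    Nat.card {α : K | α ≠ 0 ∧
        IsBentF k (fun x => tr (α * (x ^ (2 ^ i) * h (x + x ^ (2 ^ k)))))} =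
      2 ^ (2 * k) - 2 ^ k :=
  stmt10_general k i hcard h hperm
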